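/- Let a = (a_1, …, a_n) be a nonempty list of even integers with |a_i| ≥ 4 for every i. Then d([a]) = n; that is, the depth of the rational [a] equals the length of the list. -/

import Mathlib

/-!
For an integer `a ≥ 3` the map `w ↦ 1/(a + w)` is the Möbius transformation with integer matrix
`!![0, 1; 1, a]` of determinant `-1`. On `[-1, 1]` its denominators stay positive, so it carries
a mediant `(α + γ)/(β + δ)` with `αδ - βγ = ±1` to the mediant of the images: it maps Farey
parents to Farey parents. By induction on the derivation of the depth, `d(1/(a + w)) = d(w) + 1`
whenever `|w| ≤ 1`, and the case `a ≤ -3` follows from `d(-x) = d(x)`. Since `|[a]| ≤ 1` when all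
`|aᵢ| ≥ 3`, peeling off the partial quotients one at a time gives `d([a]) = n`. Uniqueness of the
Farey parents (from uniqueness of the Bézout solution `aq - bp = 1` with `0 < b < q`) makes the
depth a function, so `fareyDepth` takes this value.
-/

/-- The continued fraction value `[a₁, …, aₙ] = 1/(a₁ + 1/(a₂ + ⋯ + 1/aₙ))` of a
list of integers, defined recursively with `[] = 0`, using the total division of `ℚ`. -/
def cfVal : List ℤ → ℚ
  | [] => 0
  | a :: l => 1 / ((a : ℚ) + cfVal l)

/-- `u` and `v` are the two Farey parents of `x`: there are integers `a, b, c, d` with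
`1 ≤ b, d`, `b + d = q`, `a + c = p`, `a·d − b·c = ±1`, `u = a/b` and `v = c/d`,
where `x = p/q` in lowest terms. -/
def IsFareyParents (x u v : ℚ) : Prop :=
  ∃ a b c d : ℤ, 1 ≤ b ∧ 1 ≤ d ∧ b + d = (x.den : ℤ) ∧ a + c = x.num ∧
    (a * d - b * c = 1 ∨ a * d - b * c = -1) ∧
    u = (a : ℚ) / (b : ℚ) ∧ v = (c : ℚ) / (d : ℚ)

/-- The graph of the depth function on `ℚ`: integers have depth `0`, and otherwise
`d(x) = 1 + min(d(u), d(v))` where `u, v` are the two Farey parents of `x`. -/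
inductive DepthRel : ℚ → ℕ → Prop
  | int (x : ℚ) (h : x.den = 1) : DepthRel x 0
  | step (x u v : ℚ) (m k : ℕ) (h : x.den ≠ 1) (hp : IsFareyParents x u v)
      (hu : DepthRel u m) (hv : DepthRel v k) : DepthRel x (1 + min m k)

/-- The depth `d(x)` of a rational number. -/
noncomputable def fareyDepth (x : ℚ) : ℕ := sInf {n | DepthRel x n}

lemma Rat.den_intCast_div_le {a b : ℤ} (hb : 0 < b) : (((a : ℚ) / b).den : ℤ) ≤ b := by
  rw [← Rat.divInt_eq_div]
  exact Int.le_of_dvd hb (Rat.den_dvd a b)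

lemma Rat.abs_num_lt_den {x : ℚ} (hx : |x| ≤ 1) (hden : x.den ≠ 1) : |x.num| < x.den := by
  have hx1 : |x| < 1 := by
    refine lt_of_le_of_ne hx fun h => hden ?_
    rcases (abs_eq zero_le_one).mp h with rfl | rfl <;> rfl
  have : |(x.num : ℚ)| < x.den := by
    rwa [← Rat.num_div_den x, abs_div, Nat.abs_cast, div_lt_one (by positivity)] at hx1
  exact_mod_cast this

lemma Int.abs_le_of_mul_sub_mul_eq_one {p q a b : ℤ} (hb : 1 ≤ b) (hp : |p| < q)
    (h : a * q - b * p = 1 ∨ a * q - b * p = -1) : |a| ≤ b := by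
  rw [abs_lt] at hp
  rw [abs_le]
  rcases h with h | h <;> constructor <;> nlinarith

lemma Int.eq_of_mul_sub_mul_eq {p q a b a' b' : ℤ} (hcop : IsCoprime q p)
    (hb : 1 ≤ b) (hbq : b < q) (hb' : 1 ≤ b') (hbq' : b' < q)
    (h : a * q - b * p = a' * q - b' * p) : a = a' ∧ b = b' := by
  have hdvd : q ∣ (b - b') * p := ⟨a - a', by linarith⟩
  have hbb : b - b' = 0 := Int.eq_zero_of_abs_lt_dvd (hcop.dvd_of_dvd_mul_right hdvd)
    (abs_sub_lt_iff.mpr ⟨by omega, by omega⟩)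
  refine ⟨mul_right_cancel₀ (show q ≠ 0 by omega) ?_, by omega⟩
  rw [show b' = b by omega] at h
  linarith

lemma Int.isCoprime_of_det {a b c d : ℤ} (hdet : a * d - b * c = 1 ∨ a * d - b * c = -1) :
    IsCoprime a b := by
  rcases hdet with h | h
  · exact ⟨d, -c, by linarith⟩
  · exact ⟨-d, c, by linarith⟩

lemma isFareyParents_mediant {a b c d : ℤ} (hb : 1 ≤ b) (hd : 1 ≤ d)
    (hdet : a * d - b * c = 1 ∨ a * d - b * c = -1) :
    IsFareyParents (((a + c : ℤ) : ℚ) / ((b + d : ℤ) : ℚ)) (a / b) (c / d) := by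
  have hcop : Nat.Coprime (a + c).natAbs (b + d).natAbs := by
    refine Int.isCoprime_iff_nat_coprime.mp (Int.isCoprime_of_det (c := a) (d := b) ?_)
    rcases hdet with h | h
    · right; linarith
    · left; linarith
  exact ⟨a, b, c, d, hb, hd, (Rat.den_div_eq_of_coprime (by omega) hcop).symm,
    (Rat.num_div_eq_of_coprime (by omega) hcop).symm, hdet, rfl, rfl⟩

namespace IsFareyParents

variable {x u v : ℚ}

lemma symm (h : IsFareyParents x u v) : IsFareyParents x v u := by
  obtain ⟨a, b, c, d, hb, hd, hden, hnum, hdet, hu, hv⟩ := h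
  refine ⟨c, d, a, b, hd, hb, by omega, by omega, ?_, hv, hu⟩
  rcases hdet with h | h
  · right; linarith
  · left; linarith

lemma neg (h : IsFareyParents x u v) : IsFareyParents (-x) (-u) (-v) := by
  obtain ⟨a, b, c, d, hb, hd, hden, hnum, hdet, rfl, rfl⟩ := h
  refine ⟨-a, b, -c, d, hb, hd, by rwa [Rat.den_neg_eq_den], ?_, ?_, ?_, ?_⟩
  · rw [Rat.num_neg_eq_neg_num]; omega
  · rcases hdet with h | h
    · right; linarith
    · left; linarith
  · push_cast; ring
  · push_cast; ring

lemma den_ne_one (h : IsFareyParents x u v) : x.den ≠ 1 := by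
  obtain ⟨a, b, c, d, hb, hd, hden, -⟩ := h
  omega

lemma den_left_lt (h : IsFareyParents x u v) : u.den < x.den := by
  obtain ⟨a, b, c, d, hb, hd, hden, -, -, rfl, -⟩ := h
  have := Rat.den_intCast_div_le (a := a) (by omega : 0 < b)
  omega

lemma abs_left_le_one (h : IsFareyParents x u v) (hx : |x| ≤ 1) : |u| ≤ 1 := by
  have hp := Rat.abs_num_lt_den hx h.den_ne_one
  obtain ⟨a, b, c, d, hb, hd, hden, hnum, hdet, rfl, -⟩ := h
  have hab : |a| ≤ b := Int.abs_le_of_mul_sub_mul_eq_one hb hp <| by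
    rw [← hden, ← hnum]
    convert hdet using 2 <;> ring
  have hb' : (0 : ℚ) < b := by exact_mod_cast hb
  rw [abs_div, abs_of_pos hb', div_le_one hb']
  exact_mod_cast hab

/-- The parent `a/b` with `a q - b p = ε` is the unique Bézout solution with `0 < b < q`. -/
lemma eq_or_swap {u' v' : ℚ} (h : IsFareyParents x u v) (h' : IsFareyParents x u' v') :
    (u = u' ∧ v = v') ∨ (u = v' ∧ v = u') := by
  obtain ⟨a, b, c, d, hb, hd, hden, hnum, hdet, rfl, rfl⟩ := h
  obtain ⟨a', b', c', d', hb', hd', hden', hnum', hdet', rfl, rfl⟩ := h'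
  have hcop : IsCoprime (x.den : ℤ) x.num :=
    (Int.isCoprime_iff_nat_coprime.mpr (by simpa using x.reduced)).symm
  set q := (x.den : ℤ)
  set p := x.num
  have ha : a * q - b * p = a * d - b * c := by rw [← hden, ← hnum]; ring
  have hc : c * q - d * p = -(a * d - b * c) := by rw [← hden, ← hnum]; ring
  have ha' : a' * q - b' * p = a' * d' - b' * c' := by rw [← hden', ← hnum']; ring
  have hc' : c' * q - d' * p = -(a' * d' - b' * c') := by rw [← hden', ← hnum']; ring
  by_cases hs : a * d - b * c = a' * d' - b' * c'
  · obtain ⟨rfl, rfl⟩ := Int.eq_of_mul_sub_mul_eq (a := a) (a' := a') hcop hb (by omega) hb'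
      (by omega) (by omega)
    obtain ⟨rfl, rfl⟩ := Int.eq_of_mul_sub_mul_eq (a := c) (a' := c') hcop hd (by omega) hd'
      (by omega) (by omega)
    exact Or.inl ⟨rfl, rfl⟩
  · obtain ⟨rfl, rfl⟩ := Int.eq_of_mul_sub_mul_eq (a := a) (a' := c') hcop hb (by omega) hd'
      (by omega) (by omega)
    obtain ⟨rfl, rfl⟩ := Int.eq_of_mul_sub_mul_eq (a := c) (a' := a') hcop hd (by omega) hb'
      (by omega) (by omega)
    exact Or.inr ⟨rfl, rfl⟩

lemma exists_of_den_ne_one (hx : x.den ≠ 1) : ∃ u v, IsFareyParents x u v := by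
  have hq : 2 ≤ (x.den : ℤ) := by have := x.pos; omega
  obtain ⟨s, t, hst⟩ : IsCoprime (x.den : ℤ) x.num :=
    (Int.isCoprime_iff_nat_coprime.mpr (by simpa using x.reduced)).symm
  set q := (x.den : ℤ)
  set p := x.num
  -- reduce the Bézout coefficient `-t` modulo `q` to get `a q - b p = 1` with `0 ≤ b < q`
  set b := -t % q
  set a := s - (-t / q) * p
  have hdiv : b + q * (-t / q) = -t := Int.emod_add_mul_ediv (-t) q
  have hab : a * q - b * p = 1 := by linear_combination hst - p * hdiv
  have hb0 : 0 ≤ b := Int.emod_nonneg _ (by omega)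
  have hbq : b < q := Int.emod_lt_of_pos _ (by omega)
  have hb1 : b ≠ 0 := by
    rintro hb
    have := Int.le_of_dvd one_pos (show q ∣ 1 from ⟨a, by rw [hb] at hab; linarith⟩)
    omega
  refine ⟨a / b, ((p - a : ℤ) : ℚ) / ((q - b : ℤ) : ℚ), a, b, p - a, q - b, by omega, by omega,
    by omega, by omega, Or.inl ?_, rfl, rfl⟩
  linear_combination hab

end IsFareyParents

lemma exists_depthRel (x : ℚ) : ∃ n, DepthRel x n := by
  induction hN : x.den using Nat.strong_induction_on generalizing x with
  | _ N ih =>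
    by_cases hx : x.den = 1
    · exact ⟨0, .int x hx⟩
    obtain ⟨u, v, hp⟩ := IsFareyParents.exists_of_den_ne_one hx
    obtain ⟨m, hm⟩ := ih _ (hN ▸ hp.den_left_lt) u rfl
    obtain ⟨k, hk⟩ := ih _ (hN ▸ hp.symm.den_left_lt) v rfl
    exact ⟨_, .step x u v m k hx hp hm hk⟩

namespace DepthRel

lemma unique {x : ℚ} {m k : ℕ} (hm : DepthRel x m) (hk : DepthRel x k) : m = k := by
  induction hm generalizing k with
  | int x hx =>
    cases hk with
    | int => rfl
    | step _ _ _ _ _ hx' => exact absurd hx hx'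
  | step x u v m₁ k₁ hx hp _ _ ihu ihv =>
    cases hk with
    | int _ hx' => exact absurd hx' hx
    | step _ u' v' m₂ k₂ _ hp' hu' hv' =>
      rcases hp.eq_or_swap hp' with ⟨rfl, rfl⟩ | ⟨rfl, rfl⟩
      · rw [ihu hu', ihv hv']
      · rw [ihu hv', ihv hu', min_comm]

lemma neg {x : ℚ} {n : ℕ} (h : DepthRel x n) : DepthRel (-x) n := by
  induction h with
  | int x hx => exact .int _ (by rwa [Rat.den_neg_eq_den])
  | step x u v m k hx hp _ _ ihu ihv =>
    exact .step _ _ _ m k (by rwa [Rat.den_neg_eq_den]) hp.neg ihu ihv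

end DepthRel

lemma fareyDepth_eq_of_depthRel {x : ℚ} {n : ℕ} (h : DepthRel x n) : fareyDepth x = n := by
  have : {n | DepthRel x n} = {n} := Set.ext fun _ => ⟨(·.unique h), (· ▸ h)⟩
  rw [fareyDepth, this, csInf_singleton]

lemma one_div_intCast_add_div {a α β : ℤ} (hβ : β ≠ 0) (h : a * β + α ≠ 0) :
    1 / ((a : ℚ) + α / β) = β / ((a * β + α : ℤ) : ℚ) := by
  have hβ' : (β : ℚ) ≠ 0 := by exact_mod_cast hβ
  have h' : ((a * β + α : ℤ) : ℚ) ≠ 0 := by exact_mod_cast h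
  push_cast at h' ⊢
  field_simp

lemma IsFareyParents.one_div_intCast_add {x u v : ℚ} {a : ℤ} (h : IsFareyParents x u v)
    (hu : 0 < a + u) (hv : 0 < a + v) :
    IsFareyParents (1 / (a + x)) (1 / (a + u)) (1 / (a + v)) := by
  obtain ⟨α, β, γ, δ, hβ, hδ, hden, hnum, hdet, rfl, rfl⟩ := h
  have denom_pos {α β : ℤ} (hβ : 1 ≤ β) (h : (0 : ℚ) < a + α / β) : 1 ≤ a * β + α := by
    have hβ' : (0 : ℚ) < β := by exact_mod_cast hβ
    have : (0 : ℚ) < (a + α / β) * β := mul_pos h hβ'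
    rw [add_mul, div_mul_cancel₀ _ hβ'.ne'] at this
    exact_mod_cast this
  have hB := denom_pos hβ hu
  have hD := denom_pos hδ hv
  have hx : x = ((α + γ : ℤ) : ℚ) / ((β + δ : ℤ) : ℚ) := by
    rw [hnum, hden]; exact (Rat.num_div_den x).symm
  have hx' : 1 / (a + x) = ((β + δ : ℤ) : ℚ) / ((a * β + α + (a * δ + γ) : ℤ) : ℚ) := by
    rw [hx, one_div_intCast_add_div (by omega) (by have := mul_add a β δ; omega)]
    push_cast; ring_nf
  -- the images are the mediant data `β/(aβ + α)`, `δ/(aδ + γ)`, of determinant `-(αδ - βγ)`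
  rw [hx', one_div_intCast_add_div (by omega) (by omega),
    one_div_intCast_add_div (by omega) (by omega)]
  refine isFareyParents_mediant hB hD ?_
  rcases hdet with h | h
  · right; linear_combination -h
  · left; linear_combination -h

lemma depthRel_one_div_intCast {M : ℤ} (hM : 2 ≤ M) : DepthRel (1 / M) 1 := by
  have hp := isFareyParents_mediant (a := 0) (b := 1) (c := 1) (d := M - 1) le_rfl (by omega)
    (Or.inr (by ring))
  obtain ⟨k, hk⟩ := exists_depthRel ((1 : ℤ) / (M - 1 : ℤ))
  rw [show ((0 + 1 : ℤ) : ℚ) / ((1 + (M - 1) : ℤ) : ℚ) = 1 / M by push_cast; ring_nf] at hp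
  simpa using DepthRel.step _ _ _ 0 k hp.den_ne_one hp (.int _ (by norm_num)) hk

namespace DepthRel

lemma one_div_intCast_add_of_three_le {w : ℚ} {n : ℕ} {a : ℤ} (h : DepthRel w n)
    (hw : |w| ≤ 1) (ha : 3 ≤ a) : DepthRel (1 / (a + w)) (n + 1) := by
  induction h with
  | int w hw₁ =>
    rw [← Rat.coe_int_num_of_den_eq_one hw₁] at hw ⊢
    have := abs_le.mp (show |w.num| ≤ 1 by exact_mod_cast hw)
    simpa using depthRel_one_div_intCast (M := a + w.num) (by omega)
  | step x u v m k hx hp _ _ ihu ihv =>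
    have hu := abs_le.mp (hp.abs_left_le_one hw)
    have hv := abs_le.mp (hp.symm.abs_left_le_one hw)
    have ha' : (3 : ℚ) ≤ a := by exact_mod_cast ha
    have hp' := hp.one_div_intCast_add (a := a) (by linarith) (by linarith)
    convert DepthRel.step _ _ _ _ _ hp'.den_ne_one hp' (ihu (abs_le.mpr hu))
      (ihv (abs_le.mpr hv)) using 1
    omega

lemma one_div_intCast_add {w : ℚ} {n : ℕ} {a : ℤ} (h : DepthRel w n) (hw : |w| ≤ 1)
    (ha : 3 ≤ |a|) : DepthRel (1 / (a + w)) (n + 1) := by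
  rcases le_or_gt 0 a with ha₀ | ha₀
  · exact h.one_div_intCast_add_of_three_le hw (by rwa [abs_of_nonneg ha₀] at ha)
  · have := h.neg.one_div_intCast_add_of_three_le (a := -a) (by rwa [abs_neg])
      (by rw [abs_of_neg ha₀] at ha; omega)
    convert this.neg using 1
    push_cast
    rw [← neg_add, one_div_neg_eq_neg_one_div, neg_neg]

end DepthRel

lemma abs_cfVal_le_one {L : List ℤ} (h : ∀ a ∈ L, 3 ≤ |a|) : |cfVal L| ≤ 1 := by
  induction L with
  | nil => simp [cfVal]
  | cons a l ih =>
    have hw := ih fun b hb => h b (List.mem_cons_of_mem a hb)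
    have ha : (3 : ℚ) ≤ |(a : ℚ)| := by exact_mod_cast h a List.mem_cons_self
    have : 1 ≤ |(a : ℚ) + cfVal l| := by
      have := abs_sub_abs_le_abs_sub (a : ℚ) (-cfVal l)
      rw [abs_neg, sub_neg_eq_add] at this
      linarith
    rw [cfVal, one_div, abs_inv]
    exact inv_le_one_of_one_le₀ this

lemma depthRel_cfVal {L : List ℤ} (h : ∀ a ∈ L, 3 ≤ |a|) : DepthRel (cfVal L) L.length := by
  induction L with
  | nil => exact .int 0 rfl
  | cons a l ih =>
    have hl : ∀ b ∈ l, 3 ≤ |b| := fun b hb => h b (List.mem_cons_of_mem a hb)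
    exact (ih hl).one_div_intCast_add (abs_cfVal_le_one hl) (h a List.mem_cons_self)

theorem stmt12_general (L : List ℤ) (h : ∀ a ∈ L, Even a ∧ 4 ≤ |a|) :
    fareyDepth (cfVal L) = L.length :=
  fareyDepth_eq_of_depthRel (depthRel_cfVal fun a ha => le_trans (by norm_num) (h a ha).2)

/-- If `a = (a₁, …, aₙ)` is a nonempty list of even integers with `|aᵢ| ≥ 4` for all `i`,
then `d([a]) = n`. -/
theorem stmt12 (L : List ℤ) (hL : L ≠ []) (h : ∀ a ∈ L, Even a ∧ 4 ≤ |a|) :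
    fareyDepth (cfVal L) = L.length :=
  stmt12_general L h
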